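/- For every integer n ≥ 2 and every integer k ≥ 1, setting p_{n,k} = (1 − T) ∑_{i=0}^{k−1} T^{ni}, the k-th power of the full-twist matrix satisfies: (Ω_n^k)_{ij} = T^{j−1} p_{n,k} for all indices i ≠ j, and (Ω_n^k)_{ii} = 1 − p_{n,k} ∑_{m=1, m≠i}^{n} T^{m−1} for all i. -/
import Mathlib


open LaurentPolynomial

/-- The unreduced Burau generator matrix (0-indexed: rows/columns `k` and `k+1`
carry the nontrivial block), an `n × n` matrix over `ℤ[T,T⁻¹]`. -/
noncomputable def burauGen (n : ℕ) (k : ℕ) :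
    Matrix (Fin n) (Fin n) (LaurentPolynomial ℤ) :=
  Matrix.of fun i j =>
    if (i : ℕ) = k ∧ (j : ℕ) = k then 1 - T 1
    else if (i : ℕ) = k ∧ (j : ℕ) = k + 1 then T 1
    else if (i : ℕ) = k + 1 ∧ (j : ℕ) = k then 1
    else if (i : ℕ) = k + 1 ∧ (j : ℕ) = k + 1 then 0
    else if i = j then 1 else 0

/-- The full twist matrix `Ω_n = (ψ_1 ψ_2 ⋯ ψ_{n-1})^n`. -/
noncomputable def fullTwist (n : ℕ) : Matrix (Fin n) (Fin n) (LaurentPolynomial ℤ) :=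
  (((List.range (n - 1)).map fun k => burauGen n k).prod) ^ n

/-- The polynomial `p_{n,k} = (1 - T) ∑_{i=0}^{k-1} T^{n i}`. -/
noncomputable def twistPoly (n k : ℕ) : LaurentPolynomial ℤ :=
  (1 - T 1) * ∑ i ∈ Finset.range k, T ((n * i : ℕ) : ℤ)

/-! ### Auxiliary machinery -/

noncomputable abbrev Rlp := LaurentPolynomial ℤ

lemma fin_val_mk (n a : ℕ) (h : a < n) : ((⟨a, h⟩ : Fin n) : ℕ) = a := rfl

lemma sum_eq_pair {α M : Type*} [Fintype α] [DecidableEq α] [AddCommMonoid M]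
    (a b : α) (hab : a ≠ b) (f : α → M)
    (h : ∀ c, c ≠ a → c ≠ b → f c = 0) : ∑ c, f c = f a + f b := by
  rw [← Finset.sum_subset (Finset.subset_univ ({a, b} : Finset α))]
  · rw [Finset.sum_pair hab]
  · intro x _ hx
    simp only [Finset.mem_insert, Finset.mem_singleton, not_or] at hx
    exact h x hx.1 hx.2

noncomputable def sGeom (n : ℕ) : Rlp := ∑ m : Fin n, T ((m : ℕ) : ℤ)

lemma one_sub_T_mul_sGeom (n : ℕ) : (1 - T 1) * sGeom n = 1 - T (n : ℤ) := by
  rw [sGeom, Fin.sum_univ_eq_sum_range (fun m : ℕ => T ((m:ℕ):ℤ)), Finset.mul_sum]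
  have : ∀ m ∈ Finset.range n, ((1:Rlp) - T 1) * T ((m:ℕ):ℤ)
      = T ((m:ℕ):ℤ) - T (((m+1 : ℕ)):ℤ) := by
    intro m _
    push_cast
    rw [sub_mul, one_mul, add_comm, T_add]
  rw [Finset.sum_congr rfl this, Finset.sum_range_sub']
  simp

noncomputable def Jmat (n : ℕ) : Matrix (Fin n) (Fin n) Rlp :=
  Matrix.of fun _ j => T ((j : ℕ) : ℤ)

lemma Jmat_mul_Jmat (n : ℕ) : Jmat n * Jmat n = sGeom n • Jmat n := by
  apply Matrix.ext
  intro i j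
  rw [Matrix.mul_apply, Matrix.smul_apply]
  simp only [Jmat, Matrix.of_apply, sGeom, smul_eq_mul, Finset.sum_mul]

noncomputable def Nmat (n : ℕ) (p : Rlp) : Matrix (Fin n) (Fin n) Rlp :=
  (1 - p * sGeom n) • (1 : Matrix (Fin n) (Fin n) Rlp) + p • Jmat n

lemma Nmat_mul (n : ℕ) (p q : Rlp) :
    Nmat n p * Nmat n q = Nmat n (p + q - p * q * sGeom n) := by
  unfold Nmat
  rw [add_mul, mul_add, mul_add]
  simp only [smul_mul_assoc, mul_smul_comm, one_mul, mul_one]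
  rw [Jmat_mul_Jmat]
  simp only [smul_smul]
  rw [add_assoc, ← add_smul, ← add_smul]
  congr 1
  · ring_nf
  · ring_nf

lemma twistPoly_one (n : ℕ) : twistPoly n 1 = 1 - T 1 := by
  simp [twistPoly]

lemma twistPoly_succ (n k : ℕ) :
    twistPoly n (k + 1) = (1 - T 1) + T (n : ℤ) * twistPoly n k := by
  rw [twistPoly, twistPoly, Finset.sum_range_succ', Finset.mul_sum, mul_add]
  have h0 : ∀ i : ℕ, (T (((n * (i+1) : ℕ)) : ℤ) : Rlp) = T (n:ℤ) * T ((n*i : ℕ):ℤ) := by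
    intro i
    rw [← T_add]
    congr 1
    push_cast; ring
  simp only [h0, Nat.mul_zero, Nat.cast_zero, T_zero, mul_one]
  rw [Finset.mul_sum, Finset.mul_sum, add_comm]
  congr 1
  apply Finset.sum_congr rfl
  intro i _
  ring

lemma Nmat_pow (n k : ℕ) (hk : 1 ≤ k) :
    Nmat n (twistPoly n 1) ^ k = Nmat n (twistPoly n k) := by
  induction k with
  | zero => omega
  | succ k ih =>
    rcases Nat.eq_or_lt_of_le hk with h | h
    · rw [← h, pow_one]
    · have hk1 : 1 ≤ k := by omega
      rw [pow_succ, ih hk1, Nmat_mul]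
      congr 1
      rw [twistPoly_one, twistPoly_succ n k]
      have hs : twistPoly n k * (1 - T 1) * sGeom n
          = twistPoly n k * (1 - T (n:ℤ)) := by
        rw [mul_assoc, one_sub_T_mul_sGeom]
      rw [hs]
      ring

lemma burauGen_val (n t : ℕ) (l j : Fin n) :
    burauGen n t l j =
      if (l : ℕ) = t ∧ (j : ℕ) = t then 1 - T 1
      else if (l : ℕ) = t ∧ (j : ℕ) = t + 1 then T 1
      else if (l : ℕ) = t + 1 ∧ (j : ℕ) = t then 1
      else if (l : ℕ) = t + 1 ∧ (j : ℕ) = t + 1 then 0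
      else if (l : ℕ) = (j : ℕ) then 1 else 0 := by
  simp only [burauGen, Matrix.of_apply, Fin.ext_iff]

/-- Column structure lemma: multiplying on the right by `burauGen n t`. -/
lemma mul_burauGen (n t : ℕ) (ht : t + 1 < n)
    (M : Matrix (Fin n) (Fin n) Rlp) (i j : Fin n) :
    (M * burauGen n t) i j =
      if (j : ℕ) = t then M i ⟨t, by omega⟩ * (1 - T 1) + M i ⟨t+1, ht⟩
      else if (j : ℕ) = t + 1 then M i ⟨t, by omega⟩ * T 1
      else M i j := by
  rw [Matrix.mul_apply]
  split_ifs with h1 h2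
  · rw [sum_eq_pair (⟨t, by omega⟩ : Fin n) (⟨t+1, ht⟩ : Fin n)
      (by simp [Fin.ext_iff]) _ ?side]
    · have e1 : burauGen n t (⟨t, by omega⟩ : Fin n) j = 1 - T 1 := by
        rw [burauGen_val]; split_ifs <;> simp_all
      have e2 : burauGen n t (⟨t+1, ht⟩ : Fin n) j = 1 := by
        rw [burauGen_val]; split_ifs <;> simp_all
      rw [e1, e2, mul_one]
    case side =>
      intro c hc1 hc2
      have hc1' : (c : ℕ) ≠ t := fun h => hc1 (Fin.ext h)
      have hc2' : (c : ℕ) ≠ t + 1 := fun h => hc2 (Fin.ext h)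
      have : burauGen n t c j = 0 := by
        rw [burauGen_val]; split_ifs <;> simp_all
      rw [this, mul_zero]
  · rw [Fintype.sum_eq_single (⟨t, by omega⟩ : Fin n) ?side2]
    · have e1 : burauGen n t (⟨t, by omega⟩ : Fin n) j = T 1 := by
        rw [burauGen_val]; split_ifs <;> simp_all
      rw [e1]
    case side2 =>
      intro c hc
      have hc' : (c : ℕ) ≠ t := fun h => hc (Fin.ext h)
      have : burauGen n t c j = 0 := by
        rw [burauGen_val]; split_ifs <;> simp_all
      rw [this, mul_zero]
  · rw [Fintype.sum_eq_single j ?side3]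
    · have e1 : burauGen n t j j = 1 := by
        rw [burauGen_val]; split_ifs <;> simp_all
      rw [e1, mul_one]
    case side3 =>
      intro c hc
      have hc' : (c : ℕ) ≠ (j : ℕ) := fun h => hc (Fin.ext h)
      have : burauGen n t c j = 0 := by
        rw [burauGen_val]; split_ifs <;> simp_all
      rw [this, mul_zero]

/-- Closed form for the partial products `ψ_0 ⋯ ψ_{t-1}`. -/
noncomputable def Qmat (n t : ℕ) : Matrix (Fin n) (Fin n) Rlp :=
  Matrix.of fun i j =>
    if (i : ℕ) = 0 then
      (if (j : ℕ) < t then (1 - T 1) * T ((j : ℕ) : ℤ)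
       else if (j : ℕ) = t then T ((t : ℕ) : ℤ) else 0)
    else if (i : ℕ) ≤ t then (if (i : ℕ) - 1 = (j : ℕ) then 1 else 0)
    else (if (i : ℕ) = (j : ℕ) then 1 else 0)

lemma prod_burauGen (n : ℕ) : ∀ t, t ≤ n - 1 →
    (((List.range t).map fun k => burauGen n k).prod) = Qmat n t := by
  intro t
  induction t with
  | zero =>
    intro _
    apply Matrix.ext
    intro i j
    simp only [List.range_zero, List.map_nil, List.prod_nil, Qmat, Matrix.of_apply]
    rw [Matrix.one_apply]
    split_ifs <;> simp_all [Fin.ext_iff] <;> omega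
  | succ t ih =>
    intro ht
    have ht' : t + 1 < n := by omega
    rw [List.range_succ, List.map_append, List.prod_append, List.map_singleton,
      List.prod_singleton, ih (by omega)]
    apply Matrix.ext
    intro i j
    rw [mul_burauGen n t ht']
    simp only [Qmat, Matrix.of_apply, fin_val_mk]
    split_ifs <;>
      first
        | rfl
        | omega
        | ring1
        | (rw [(by omega : ((j : ℕ) : ℤ) = (t : ℤ))]; ring1)
        | (show (T (t:ℤ) : Rlp) * T 1 = T ((t+1 : ℕ) : ℤ); push_cast; rw [← T_add])

/-- The closed form `B_m` for `(ψ_0 ⋯ ψ_{n-2})^m`, `1 ≤ m ≤ n`. -/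
noncomputable def Bmat (n m : ℕ) : Matrix (Fin n) (Fin n) Rlp :=
  Matrix.of fun i j =>
    if (i : ℕ) < m then
      (1 - T 1) * T ((j : ℕ) : ℤ) + (if (j : ℕ) = n - m + (i : ℕ) then T (n : ℤ) else 0)
    else (if (i : ℕ) - m = (j : ℕ) then 1 else 0)

lemma Qmat_eq_Bmat_one (n : ℕ) (hn : 2 ≤ n) : Qmat n (n - 1) = Bmat n 1 := by
  apply Matrix.ext
  intro i j
  simp only [Qmat, Bmat, Matrix.of_apply]
  split_ifs <;>
    first
      | rfl
      | omega
      | ring1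
      | (rw [show (T ((n:ℕ):ℤ) : Rlp) = T ((j:ℕ):ℤ) * T 1 by
           rw [(by omega : ((n:ℕ):ℤ) = ((j:ℕ):ℤ) + 1), T_add],
           (by omega : (((n - 1 : ℕ)):ℤ) = ((j:ℕ):ℤ))]; ring1)

lemma mul_Bmat_one (n : ℕ) (hn : 1 ≤ n) (M : Matrix (Fin n) (Fin n) Rlp) (i j : Fin n) :
    (M * Bmat n 1) i j =
      M i ⟨0, by omega⟩ * Bmat n 1 ⟨0, by omega⟩ j
        + (if h : (j : ℕ) + 1 < n then M i ⟨(j : ℕ) + 1, h⟩ else 0) := by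
  rw [Matrix.mul_apply]
  split_ifs with h
  · rw [sum_eq_pair (⟨0, by omega⟩ : Fin n) (⟨(j:ℕ)+1, h⟩ : Fin n)
      (by simp [Fin.ext_iff]) _ ?side]
    · congr 1
      have : Bmat n 1 (⟨(j:ℕ)+1, h⟩ : Fin n) j = 1 := by
        simp only [Bmat, Matrix.of_apply, fin_val_mk]
        split_ifs <;> first | rfl | omega
      rw [this, mul_one]
    case side =>
      intro c hc1 hc2
      have hc1' : (c : ℕ) ≠ 0 := fun hh => hc1 (Fin.ext hh)
      have hc2' : (c : ℕ) ≠ (j:ℕ)+1 := fun hh => hc2 (Fin.ext hh)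
      have : Bmat n 1 c j = 0 := by
        simp only [Bmat, Matrix.of_apply]
        split_ifs <;> first | rfl | omega
      rw [this, mul_zero]
  · rw [add_zero, Fintype.sum_eq_single (⟨0, by omega⟩ : Fin n) ?side2]
    case side2 =>
      intro c hc
      have hc' : (c : ℕ) ≠ 0 := fun hh => hc (Fin.ext hh)
      have hjn : (j : ℕ) + 1 = n := by omega
      have : Bmat n 1 c j = 0 := by
        simp only [Bmat, Matrix.of_apply]
        split_ifs <;> first | rfl | omega
      rw [this, mul_zero]

set_option maxHeartbeats 2000000 in
lemma Bmat_pow (n : ℕ) (hn : 2 ≤ n) :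
    ∀ m, 1 ≤ m → m ≤ n → Bmat n 1 ^ m = Bmat n m := by
  intro m
  induction m with
  | zero => omega
  | succ m ih =>
    intro _ hmn
    rcases Nat.eq_or_lt_of_le (Nat.one_le_iff_ne_zero.mpr (by omega) : 1 ≤ m + 1)
      with h | h
    · rw [← h, pow_one]
    · have hm1 : 1 ≤ m := by omega
      rw [pow_succ, ih hm1 (by omega)]
      apply Matrix.ext
      intro i j
      rw [mul_Bmat_one n (by omega)]
      have hTj : (T ((((j:ℕ)+1 : ℕ)) : ℤ) : Rlp) = T (((j:ℕ)):ℤ) * T 1 := by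
        push_cast
        rw [T_add]
      by_cases hj : (j : ℕ) + 1 < n
      all_goals simp only [hj, dite_true, dite_false, dif_pos, dif_neg, not_false_iff]
      all_goals simp only [Bmat, Matrix.of_apply, fin_val_mk, hTj, Nat.cast_zero, T_zero]
      all_goals split_ifs <;>
        first
          | rfl
          | omega
          | ring1
          | (rw [show (T ((n:ℕ):ℤ) : Rlp) = T ((j:ℕ):ℤ) * T 1 by
               rw [(by omega : ((n:ℕ):ℤ) = ((j:ℕ):ℤ) + 1), T_add]]; ring1)

lemma Bmat_n_eq_Nmat (n : ℕ) : Bmat n n = Nmat n (1 - T 1) := by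
  apply Matrix.ext
  intro i j
  simp only [Bmat, Nmat, Jmat, Matrix.of_apply, Matrix.add_apply, Matrix.smul_apply,
    Matrix.one_apply_eq, Matrix.one_apply, smul_eq_mul, if_true, ite_true]
  have hs := one_sub_T_mul_sGeom n
  by_cases hij : i = j
  · subst hij
    have h1 : (i : ℕ) < n := i.isLt
    have h2 : (1 : Rlp) - (1 - T 1) * sGeom n = T (n : ℤ) := by
      rw [hs]; ring
    simp only [if_pos rfl, if_pos h1, if_pos (show (i:ℕ) = n - n + (i:ℕ) by omega),
      if_true, ite_true, mul_one, h2]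
    ring
  · rw [if_neg hij]
    have : (i : ℕ) < n := i.isLt
    rw [if_pos this, if_neg (by
      intro hcon
      exact hij (Fin.ext (by omega)))]
    ring

lemma fullTwist_eq (n : ℕ) (hn : 2 ≤ n) : fullTwist n = Nmat n (twistPoly n 1) := by
  rw [fullTwist, prod_burauGen n (n-1) le_rfl, Qmat_eq_Bmat_one n hn,
    Bmat_pow n hn n (by omega) le_rfl, Bmat_n_eq_Nmat, twistPoly_one]

/-- Entries of powers of the full twist: `(Ω_n^k)_{ij} = T^{j-1} p_{n,k}` off the diagonal
(0-indexed: exponent `j`), and `(Ω_n^k)_{ii} = 1 - p_{n,k} ∑_{m ≠ i} T^{m-1}`. -/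
theorem stmt5 (n : ℕ) (hn : 2 ≤ n) (k : ℕ) (hk : 1 ≤ k) :
    (∀ i j : Fin n, i ≠ j →
      (fullTwist n ^ k) i j = T ((j : ℕ) : ℤ) * twistPoly n k) ∧
    (∀ i : Fin n,
      (fullTwist n ^ k) i i =
        1 - twistPoly n k * ∑ m ∈ Finset.univ.erase i, T ((m : ℕ) : ℤ)) := by
  have hFT : fullTwist n ^ k = Nmat n (twistPoly n k) := by
    rw [fullTwist_eq n hn, Nmat_pow n k hk]
  constructor
  · intro i j hij
    rw [hFT]
    simp only [Nmat, Jmat, Matrix.add_apply, Matrix.smul_apply, Matrix.of_apply,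
      Matrix.one_apply, if_neg hij, smul_eq_mul]
    ring
  · intro i
    rw [hFT]
    simp only [Nmat, Jmat, Matrix.add_apply, Matrix.smul_apply, Matrix.of_apply,
      Matrix.one_apply_eq, smul_eq_mul]
    have herase : ∑ m ∈ Finset.univ.erase i, (T ((m : ℕ) : ℤ) : Rlp)
        = sGeom n - T ((i : ℕ) : ℤ) := by
      have h := Finset.sum_erase_add Finset.univ
        (fun m : Fin n => (T ((m : ℕ) : ℤ) : Rlp)) (Finset.mem_univ i)
      rw [sGeom, ← h]
      ring
    rw [herase]
    ring
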